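/- First-order stationarity of the prototype on the unit sphere: if the prototypes w_1, …, w_k form a simplex equiangular tight frame, then for every label y the gradient of the limiting per-sample loss L_y at the point w_y equals μ·w_y, where μ = (e − q)/(e + (k−1)·q) − 2 with q = exp(−1/(k−1)) and e = exp(1). In particular, the gradient of L_y at w_y is a negative scalar multiple of w_y. -/

import Mathlib

set_option maxHeartbeats 1000000


open scoped RealInnerProductSpace

/-- The limiting per-sample loss
`L_y(h) = log( Σ_c exp⟪w_c, h⟫ ) − 2⟪w_y, h⟫`. -/
noncomputable def limitLoss {d k : ℕ} (w : Fin k → EuclideanSpace ℝ (Fin d)) (y : Fin k)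
    (h : EuclideanSpace ℝ (Fin d)) : ℝ :=
  Real.log (∑ c : Fin k, Real.exp ⟪w c, h⟫) - 2 * ⟪w y, h⟫

/-- **First-order stationarity of the prototype on the unit sphere.** If the unit-norm
prototypes form a simplex ETF, then for every label `y` the gradient of the limiting
per-sample loss `L_y` at `w_y` equals `μ·w_y`, where
`μ = (e − q)/(e + (k−1)·q) − 2` with `q = exp(−1/(k−1))`; in particular the gradient at `w_y`
is a negative scalar multiple of `w_y`. -/
theorem gradient_at_prototype (d k : ℕ) (hd : 0 < d) (hk : 2 ≤ k)
    (w : Fin k → EuclideanSpace ℝ (Fin d)) (hw : ∀ c, ‖w c‖ = 1)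
    (hetf : ∀ c c' : Fin k, c ≠ c' → ⟪w c, w c'⟫ = -1 / ((k : ℝ) - 1))
    (y : Fin k) :
    gradient (limitLoss w y) (w y)
        = ((Real.exp 1 - Real.exp (-1 / ((k : ℝ) - 1))) /
            (Real.exp 1 + ((k : ℝ) - 1) * Real.exp (-1 / ((k : ℝ) - 1))) - 2) • w y
      ∧ (Real.exp 1 - Real.exp (-1 / ((k : ℝ) - 1))) /
            (Real.exp 1 + ((k : ℝ) - 1) * Real.exp (-1 / ((k : ℝ) - 1))) - 2 < 0 := by
  have hk1 : (1:ℝ) ≤ (k:ℝ) - 1 := by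
    have : (2:ℝ) ≤ (k:ℝ) := by exact_mod_cast hk
    linarith
  have hk1pos : (0:ℝ) < (k:ℝ) - 1 := by linarith
  set q : ℝ := Real.exp (-1 / ((k : ℝ) - 1)) with hq
  set e : ℝ := Real.exp 1 with he
  have hqpos : 0 < q := Real.exp_pos _
  have hepos : 0 < e := Real.exp_pos _
  set S : ℝ := e + ((k:ℝ) - 1) * q with hS
  have hSpos : 0 < S := by positivity
  set μ : ℝ := (e - q) / S - 2 with hμ
  -- a helper for sums of two-valued functions
  have hsplit : ∀ (a b : ℝ) (t : Fin k),
      (∑ c' : Fin k, if c' = t then a else b) = (k:ℝ) * b + (a - b) := by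
    intro a b t
    have h1 : ∀ c' : Fin k, (if c' = t then a else b)
        = b + (if c' = t then a - b else 0) := by
      intro c'; by_cases h : c' = t <;> simp [h]
    rw [Finset.sum_congr rfl fun c' _ => h1 c', Finset.sum_add_distrib, Finset.sum_const,
      Finset.sum_ite_eq' Finset.univ t (fun _ => a - b)]
    simp [Finset.card_univ, nsmul_eq_mul]
  have hself : ∀ c : Fin k, (⟪w c, w c⟫ : ℝ) = 1 := by
    intro c
    rw [real_inner_self_eq_norm_sq, hw c]
    norm_num
  -- inner products at w y
  have hinner : ∀ c, ⟪w c, w y⟫ = if c = y then 1 else -1 / ((k:ℝ) - 1) := by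
    intro c
    by_cases hc : c = y
    · subst hc; simp [hself c, hw]
    · simp [hc, hetf c y hc]
  -- sum of prototypes is zero
  have hsum0 : (∑ c : Fin k, w c) = 0 := by
    have hin : ⟪∑ c : Fin k, w c, ∑ c : Fin k, w c⟫ = 0 := by
      rw [sum_inner]
      have h0 : ∀ c : Fin k, (⟪w c, ∑ c' : Fin k, w c'⟫ : ℝ) = 0 := by
        intro c
        rw [inner_sum]
        have h1 : ∀ c' : Fin k, (⟪w c, w c'⟫ : ℝ)
            = if c' = c then 1 else -1 / ((k:ℝ) - 1) := by
          intro c'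
          by_cases hc : c' = c
          · subst hc; simp [hself c', hw]
          · simp [hc, hetf c c' (fun h => hc h.symm)]
        rw [Finset.sum_congr rfl (fun c' _ => h1 c'), hsplit]
        field_simp
        ring
      simp [h0]
    exact inner_self_eq_zero.mp hin
  -- the weighted sum of prototypes
  have hvec : (∑ c : Fin k, Real.exp ⟪w c, w y⟫ • w c) = (e - q) • w y := by
    have h1 : ∀ c : Fin k, Real.exp ⟪w c, w y⟫ • w c
        = q • w c + (if c = y then (e - q) • w y else 0) := by
      intro c
      by_cases hc : c = y
      · subst hc
        rw [hinner]
        simp [← add_smul, he]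
      · rw [hinner]
        simp [hc, hq]
    rw [Finset.sum_congr rfl (fun c _ => h1 c), Finset.sum_add_distrib,
      ← Finset.smul_sum, hsum0, Finset.sum_ite_eq' Finset.univ y
        (fun _ => (e - q) • w y)]
    simp
  -- sum of exponentials
  have hSum : (∑ c : Fin k, Real.exp ⟪w c, w y⟫) = S := by
    have h1 : ∀ c : Fin k, Real.exp ⟪w c, w y⟫ = if c = y then e else q := by
      intro c; rw [hinner, apply_ite Real.exp]
    rw [Finset.sum_congr rfl (fun c _ => h1 c), hsplit, hS]
    ring
  have hSne : (∑ c : Fin k, Real.exp ⟪w c, w y⟫) ≠ 0 := by rw [hSum]; exact ne_of_gt hSpos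
  -- the Fréchet derivative
  set L₁ : EuclideanSpace ℝ (Fin d) →L[ℝ] ℝ :=
    S⁻¹ • (∑ c : Fin k, Real.exp ⟪w c, w y⟫ • innerSL ℝ (w c)) - (2:ℝ) • innerSL ℝ (w y)
    with hL₁
  have hfd : HasFDerivAt (limitLoss w y) L₁ (w y) := by
    have h1 : ∀ c : Fin k, HasFDerivAt (fun h : EuclideanSpace ℝ (Fin d) => Real.exp ⟪w c, h⟫)
        (Real.exp ⟪w c, w y⟫ • innerSL ℝ (w c)) (w y) :=
      fun c => (Real.hasDerivAt_exp _).comp_hasFDerivAt (w y)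
        (innerSL ℝ (w c)).hasFDerivAt
    have h2 : HasFDerivAt (fun h : EuclideanSpace ℝ (Fin d) => ∑ c : Fin k, Real.exp ⟪w c, h⟫)
        (∑ c : Fin k, Real.exp ⟪w c, w y⟫ • innerSL ℝ (w c)) (w y) :=
      HasFDerivAt.fun_sum (fun c _ => h1 c)
    have h3 : HasFDerivAt (fun h : EuclideanSpace ℝ (Fin d) => Real.log (∑ c : Fin k, Real.exp ⟪w c, h⟫))
        (S⁻¹ • (∑ c : Fin k, Real.exp ⟪w c, w y⟫ • innerSL ℝ (w c))) (w y) := by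
      have := (Real.hasDerivAt_log hSne).comp_hasFDerivAt (w y) h2
      rwa [hSum] at this
    have h4 : HasFDerivAt (fun h : EuclideanSpace ℝ (Fin d) => 2 * ⟪w y, h⟫)
        ((2:ℝ) • innerSL ℝ (w y)) (w y) :=
      (innerSL ℝ (w y)).hasFDerivAt.const_mul 2
    exact h3.sub h4
  -- identify L₁ with toDual (μ • w y)
  have hL : L₁ = InnerProductSpace.toDual ℝ (EuclideanSpace ℝ (Fin d)) (μ • w y) := by
    ext v
    simp only [hL₁, ContinuousLinearMap.sub_apply, ContinuousLinearMap.smul_apply,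
      ContinuousLinearMap.sum_apply, innerSL_apply_apply, InnerProductSpace.toDual_apply_apply,
      smul_eq_mul, real_inner_smul_left]
    have h5 : (∑ c : Fin k, Real.exp ⟪w c, w y⟫ * ⟪w c, v⟫) = (e - q) * ⟪w y, v⟫ := by
      rw [show (∑ c : Fin k, Real.exp ⟪w c, w y⟫ * ⟪w c, v⟫)
          = ∑ c : Fin k, (⟪Real.exp ⟪w c, w y⟫ • w c, v⟫ : ℝ) from
        Finset.sum_congr rfl (fun c _ => (real_inner_smul_left _ _ _).symm),
        ← sum_inner, hvec, real_inner_smul_left]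
    rw [h5, hμ]
    field_simp
  have hgrad : HasGradientAt (limitLoss w y) (μ • w y) (w y) := by
    rw [hasGradientAt_iff_hasFDerivAt, ← hL]
    exact hfd
  refine ⟨hgrad.gradient, ?_⟩
  -- negativity
  have h1 : e - q < S := by
    rw [hS]; nlinarith
  have h2 : (e - q) / S < 1 := (div_lt_one hSpos).mpr h1
  rw [hμ]
  linarith
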